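/- In a double occurrence word, a letter has even Gaussian parity if and only if it is interleaved with an even number of other letters. -/

import Mathlib

/-- The list of positions at which the letter `c` occurs in the word `w`. -/
def occs {α : Type*} [DecidableEq α] (w : List α) (c : α) : List ℕ :=
  (List.range w.length).filter (fun i => w[i]? = some c)

/-- The Gaussian parity of the letter `c` in a double occurrence word `w`:
if `c` occurs at positions `i < j`, it is `(j - i - 1) % 2`. -/
def gaussParity {α : Type*} [DecidableEq α] (w : List α) (c : α) : ℕ :=
  match occs w c with
  | [i, j] => (j - i - 1) % 2
  | _ => 0

/-- The number of occurrences of `b` strictly between the two occurrences of `c`. -/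
def betweenCount {α : Type*} [DecidableEq α] (w : List α) (c b : α) : ℕ :=
  match occs w c with
  | [i, j] => ((occs w b).filter (fun k => i < k ∧ k < j)).length
  | _ => 0

/-- `b` is interleaved with `c` if exactly one occurrence of `b` lies strictly
between the two occurrences of `c`. -/
def Interleaved {α : Type*} [DecidableEq α] (w : List α) (b c : α) : Prop :=
  betweenCount w c b = 1

instance {α : Type*} [DecidableEq α] (w : List α) (b c : α) :
    Decidable (Interleaved w b c) := by unfold Interleaved; infer_instance

/-- A double occurrence word: every occurring letter occurs exactly twice. -/
def IsDOW {α : Type*} [DecidableEq α] (w : List α) : Prop :=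
  ∀ c ∈ w, w.count c = 2

/-- The odd writhe of a signed double occurrence word: the sum of the signs of
the letters of odd Gaussian parity. -/
def oddWrithe {α : Type*} [DecidableEq α] (w : List α) (sign : α → ℤ) : ℤ :=
  ((w.dedup.filter (fun c => gaussParity w c = 1)).map sign).sum


section Aux
variable {α : Type*} [DecidableEq α]

lemma occs_length (w : List α) (c : α) : (occs w c).length = w.count c := by
  induction w with
  | nil => simp [occs]
  | cons a t ih =>
    have hfun : ((fun i => decide ((a :: t)[i]? = some c)) ∘ Nat.succ) =
        (fun i => decide (t[i]? = some c)) := by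
      funext i; simp
    simp only [occs] at ih
    simp only [occs, List.length_cons, List.range_succ_eq_map, List.filter_cons,
      List.filter_map, List.length_map, hfun, List.getElem?_cons_succ, List.count_cons]
    by_cases h : a = c <;> simp [h, ih]

lemma mem_occs {w : List α} {c : α} {k : ℕ} :
    k ∈ occs w c ↔ k < w.length ∧ w[k]? = some c := by
  simp [occs, List.mem_filter]

lemma occs_sorted (w : List α) (c : α) : (occs w c).Pairwise (· < ·) :=
  (List.pairwise_lt_range (n := w.length)).sublist List.filter_sublist

lemma filter_length_toFinset {β : Type*} [DecidableEq β] (l : List β) (hl : l.Nodup)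
    (p : β → Bool) :
    (l.filter p).length = (l.toFinset.filter (fun k => p k = true)).card := by
  rw [← List.toFinset_card_of_nodup (hl.filter p), List.toFinset_filter]

lemma range_toFinset (n : ℕ) : (List.range n).toFinset = Finset.range n := by
  ext k; simp

end Aux


/-- A letter of a double occurrence word has even Gaussian parity if and only
if it is interleaved with an even number of other letters. -/
theorem gaussParity_even_iff_even_interleavings {α : Type*} [DecidableEq α]
    (w : List α) (hw : IsDOW w) (c : α) (hc : c ∈ w) :
    gaussParity w c = 0 ↔
      (w.dedup.filter (fun b => b ≠ c ∧ Interleaved w b c)).length % 2 = 0 := by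
  classical
  have hlen : (occs w c).length = 2 := by rw [occs_length]; exact hw c hc
  obtain ⟨i, j, hij⟩ := List.length_eq_two.mp hlen
  have hilt : i < j := by
    have hs := occs_sorted w c
    rw [hij] at hs
    simpa using hs
  have hjlen : j < w.length := by
    have : j ∈ occs w c := by rw [hij]; simp
    exact (mem_occs.mp this).1
  set n := w.length with hn
  set f : ℕ → α := fun k => w.getD k c with hf
  have hfk : ∀ k, k < n → w[k]? = some (f k) := by
    intro k hk
    simp [hf, List.getD_eq_getElem?_getD,
      List.getElem?_eq_getElem hk]
  set t := w.dedup.toFinset with ht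
  set S : Finset ℕ := (Finset.range n).filter (fun k => i < k ∧ k < j) with hS
  have hScard : S.card = j - i - 1 := by
    have hSI : S = Finset.Ioo i j := by
      ext k
      simp only [hS, Finset.mem_filter, Finset.mem_range, Finset.mem_Ioo]
      omega
    rw [hSI, Nat.card_Ioo]
  have hmem_t : ∀ k ∈ S, f k ∈ t := by
    intro k hk
    have hkn : k < n := by
      have := (Finset.mem_filter.mp hk).1
      simpa using this
    have := hfk k hkn
    have hmem : f k ∈ w := by
      have := List.mem_of_getElem? this
      exact this
    simpa [ht, List.mem_toFinset, List.mem_dedup] using hmem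
  have hfiber : S.card = ∑ b ∈ t, (S.filter (fun k => f k = b)).card :=
    Finset.card_eq_sum_card_fiberwise hmem_t
  have hbcval : ∀ b, betweenCount w c b =
      ((occs w b).filter (fun k => i < k ∧ k < j)).length := by
    intro b; unfold betweenCount; rw [hij]
  have hbc : ∀ b ∈ t, (S.filter (fun k => f k = b)).card = betweenCount w c b := by
    intro b _
    rw [hbcval b]
    have h1 : (occs w b).filter (fun k => decide (i < k ∧ k < j)) =
        (List.range n).filter (fun a => decide (i < a ∧ a < j) &&
          decide (w[a]? = some b)) := by
      rw [occs, List.filter_filter]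
    rw [h1, filter_length_toFinset _ (List.nodup_range (n := n)), range_toFinset]
    rw [hS, Finset.filter_filter]
    congr 1
    apply Finset.filter_congr
    intro k hk
    simp only [Finset.mem_range] at hk
    rw [hfk k hk]
    simp only [Bool.and_eq_true, decide_eq_true_eq, Option.some.injEq]
  have hbcle : ∀ b ∈ t, betweenCount w c b ≤ 2 := by
    intro b hb
    have hbw : b ∈ w := by simpa [ht, List.mem_toFinset, List.mem_dedup] using hb
    calc betweenCount w c b ≤ (occs w b).length := by
          rw [hbcval b]; exact List.length_filter_le _ _
      _ = 2 := by rw [occs_length]; exact hw b hbw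
  have hbcc : betweenCount w c c = 0 := by
    rw [hbcval c, hij]
    simp [List.filter_cons, hilt]
  have hmod : ∀ b ∈ t, betweenCount w c b % 2 =
      if b ≠ c ∧ Interleaved w b c then 1 else 0 := by
    intro b hb
    by_cases hI : betweenCount w c b = 1
    · have hbc' : b ≠ c := by rintro rfl; rw [hbcc] at hI; omega
      simp [hI, Interleaved, hbc']
    · have h2 := hbcle b hb
      have : betweenCount w c b % 2 = 0 := by omega
      simp [this, Interleaved, hI]
  have key : (j - i - 1) % 2 =
      (t.filter (fun b => b ≠ c ∧ Interleaved w b c)).card % 2 := by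
    rw [← hScard, hfiber, Finset.sum_congr rfl hbc, Finset.sum_nat_mod,
      Finset.sum_congr rfl hmod, Finset.card_filter]
  have hlast : (w.dedup.filter (fun b => decide (b ≠ c ∧ Interleaved w b c))).length =
      (t.filter (fun b => b ≠ c ∧ Interleaved w b c)).card := by
    rw [filter_length_toFinset _ (List.nodup_dedup w), ht]
    congr 1
    apply Finset.filter_congr
    intro b _
    simp
  have hgp : gaussParity w c = (j - i - 1) % 2 := by unfold gaussParity; rw [hij]
  rw [hgp, hlast, key]
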